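/- arXiv:2511.20438 — 4 statements merged into one kernel-verified Lean document; each statement's English description precedes it below -/
import Mathlib

section
/- Let S ⊆ ℝ^d have finite measure and Λ ⊆ ℝ^d separated. If E(Λ) is a Riesz sequence in L²(S) with bounds 0 < A ≤ B and Γ is a weak limit of translates of Λ, then E(Γ) is a Riesz sequence in L²(S) with the same bounds A, B. -/
open MeasureTheory Filter Metric Complex
open scoped ENNReal InnerProductSpace ComplexConjugate

noncomputable section

abbrev Euc (d : ℕ) := EuclideanSpace ℝ (Fin d)

variable {d : ℕ}

/-- The exponential function `e_λ(t) = e^{2πi λ·t}`. -/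
def expFn (l t : Euc d) : ℂ := Complex.exp (((2 * Real.pi * ⟪l, t⟫_ℝ : ℝ) : ℂ) * Complex.I)

lemma expFn_continuous (l : Euc d) : Continuous (expFn l) :=
  Complex.continuous_exp.comp <|
    (Complex.continuous_ofReal.comp (continuous_const.mul (continuous_const.inner continuous_id))).mul
      continuous_const

lemma expFn_norm (l t : Euc d) : ‖expFn l t‖ = 1 := by
  rw [expFn, Complex.norm_exp_ofReal_mul_I]

lemma expFn_memLp (S : Set (Euc d)) (hS : volume S ≠ ⊤) (l : Euc d) :
    MemLp (expFn l) 2 (volume.restrict S) := by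
  haveI : IsFiniteMeasure (volume.restrict S) :=
    ⟨by simpa [Measure.restrict_apply_univ] using lt_top_iff_ne_top.2 hS⟩
  refine MemLp.of_bound ((expFn_continuous l).aestronglyMeasurable) 1 ?_
  filter_upwards with t using le_of_eq (expFn_norm l t)

/-- `e_λ` as an element of `L²(S)`. -/
def expLp (S : Set (Euc d)) (hS : volume S ≠ ⊤) (l : Euc d) :
    Lp ℂ 2 (volume.restrict S) := (expFn_memLp S hS l).toLp _

/-- Pointwise multiplication by `e_x` (modulation) as a map on `L²(S)`. -/
def modLp (S : Set (Euc d)) (_hS : volume S ≠ ⊤) (x : Euc d)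
    (f : Lp ℂ 2 (volume.restrict S)) : Lp ℂ 2 (volume.restrict S) :=
  MemLp.toLp (fun t => expFn x t * f t) <| by
    refine MemLp.of_le (Lp.memLp f)
      (((expFn_continuous x).aestronglyMeasurable).mul (Lp.aestronglyMeasurable f)) ?_
    filter_upwards with t using le_of_eq (by rw [norm_mul, expFn_norm, one_mul])

/-- The translate `Λ - x` of a point set. -/
def setTrans (Λ : Set (Euc d)) (x : Euc d) : Set (Euc d) := (fun l => l - x) '' Λ

/-- Weak convergence of point sets in Beurling's sense. -/
def WeakLim (Λn : ℕ → Set (Euc d)) (Γ : Set (Euc d)) : Prop :=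
  (∀ γ ∈ Γ, ∃ u : ℕ → Euc d, (∀ n, u n ∈ Λn n) ∧ Tendsto u atTop (nhds γ)) ∧
  (∀ φ : ℕ → ℕ, StrictMono φ → ∀ u : ℕ → Euc d, (∀ k, u k ∈ Λn (φ k)) →
    ∀ γ : Euc d, Tendsto u atTop (nhds γ) → γ ∈ Γ)

/-- `Γ` is a weak limit of translates of `Λ`. -/
def InHull (Λ Γ : Set (Euc d)) : Prop :=
  ∃ x : ℕ → Euc d, WeakLim (fun n => setTrans Λ (x n)) Γ

/-- `Λ` is separated. -/
def IsSeparated (Λ : Set (Euc d)) : Prop :=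
  ∃ s > (0:ℝ), ∀ l ∈ Λ, ∀ m ∈ Λ, l ≠ m → s ≤ dist l m

/-- The separation constant `Sep(Λ)`. -/
def sepConst (Λ : Set (Euc d)) : ℝ≥0∞ :=
  ⨅ (l : Λ) (m : Λ) (_ : (l : Euc d) ≠ (m : Euc d)), edist (l : Euc d) (m : Euc d)

/-- Upper Beurling density. -/
def upperDensity (Λ : Set (Euc d)) : ℝ≥0∞ :=
  Filter.limsup (fun r : ℝ =>
    ⨆ x : Euc d, ((Λ ∩ ball x r).ncard : ℝ≥0∞) / volume (ball (0 : Euc d) r)) atTop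

/-- Lower Beurling density. -/
def lowerDensity (Λ : Set (Euc d)) : ℝ≥0∞ :=
  Filter.liminf (fun r : ℝ =>
    ⨅ x : Euc d, ((Λ ∩ ball x r).ncard : ℝ≥0∞) / volume (ball (0 : Euc d) r)) atTop

/-- Frame inequalities for `E(Λ)` in `L²(S)`. -/
def IsFrame (S : Set (Euc d)) (hS : volume S ≠ ⊤) (Λ : Set (Euc d)) (A B : ℝ) : Prop :=
  ∀ f : Lp ℂ 2 (volume.restrict S),
    A * ‖f‖ ^ 2 ≤ ∑' l : Λ, ‖⟪expLp S hS (l : Euc d), f⟫_ℂ‖ ^ 2 ∧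
    ∑' l : Λ, ‖⟪expLp S hS (l : Euc d), f⟫_ℂ‖ ^ 2 ≤ B * ‖f‖ ^ 2

/-- Bessel inequality for `E(Λ)` in `L²(S)`. -/
def IsBessel (S : Set (Euc d)) (hS : volume S ≠ ⊤) (Λ : Set (Euc d)) (B : ℝ) : Prop :=
  ∀ f : Lp ℂ 2 (volume.restrict S),
    ∑' l : Λ, ‖⟪expLp S hS (l : Euc d), f⟫_ℂ‖ ^ 2 ≤ B * ‖f‖ ^ 2

/-- The frame operator `S_Λ`. -/
def frameOp (S : Set (Euc d)) (hS : volume S ≠ ⊤) (Λ : Set (Euc d))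
    (f : Lp ℂ 2 (volume.restrict S)) : Lp ℂ 2 (volume.restrict S) :=
  ∑' l : Λ, ⟪expLp S hS (l : Euc d), f⟫_ℂ • expLp S hS (l : Euc d)

/-- Riesz sequence inequalities for `E(Λ)` in `L²(S)`. -/
def IsRieszSeq (S : Set (Euc d)) (hS : volume S ≠ ⊤) (Λ : Set (Euc d)) (A B : ℝ) : Prop :=
  ∀ c : Λ →₀ ℂ,
    A * ∑ l ∈ c.support, ‖c l‖ ^ 2 ≤ ‖∑ l ∈ c.support, c l • expLp S hS (l : Euc d)‖ ^ 2 ∧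
    ‖∑ l ∈ c.support, c l • expLp S hS (l : Euc d)‖ ^ 2 ≤ B * ∑ l ∈ c.support, ‖c l‖ ^ 2

/-- Closed linear span of `E(Λ)` in `L²(S)`. -/
def spanExp (S : Set (Euc d)) (hS : volume S ≠ ⊤) (Λ : Set (Euc d)) :
    Submodule ℂ (Lp ℂ 2 (volume.restrict S)) :=
  (Submodule.span ℂ (expLp S hS '' Λ)).topologicalClosure

/-- Orthogonal projection onto the closed span of `E(Λ)`. -/
def projExp (S : Set (Euc d)) (hS : volume S ≠ ⊤) (Λ : Set (Euc d))
    (f : Lp ℂ 2 (volume.restrict S)) : Lp ℂ 2 (volume.restrict S) :=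
  haveI : CompleteSpace (spanExp S hS Λ) :=
    (Submodule.isClosed_topologicalClosure _).completeSpace_coe
  (Submodule.orthogonalProjectionOnto (spanExp S hS Λ) f : Lp ℂ 2 (volume.restrict S))

/-- `E(Λ)` is a Riesz basis for `L²(S)`. -/
def IsRieszBasis (S : Set (Euc d)) (hS : volume S ≠ ⊤) (Λ : Set (Euc d)) : Prop :=
  (∃ A B : ℝ, 0 < A ∧ A ≤ B ∧ IsRieszSeq S hS Λ A B) ∧ spanExp S hS Λ = ⊤

/-! The Riesz inequalities only ever involve finitely many exponentials. Given distinct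
`γ₁, …, γₖ ∈ Γ`, choose points of the translates `Λ - xₙ` converging to them; for large `n` they
are distinct. Shifting all frequencies by `x` multiplies every `e_λ` by the unimodular `e_x`, so
`E(Λ - x)` has the same Gram matrix as `E(Λ)`, and the bounds `A, B` hold for these points. Since
`λ ↦ e_λ` is continuous into `L²(S)` (`S` has finite measure), the bounds pass to the limit. -/

open scoped Topology

lemma expFn_add (a b t : Euc d) : expFn (a + b) t = expFn a t * expFn b t := by
  simp only [expFn, ← Complex.exp_add, inner_add_left]
  push_cast
  ring_nf

lemma continuous_expFn_left (t : Euc d) : Continuous fun l : Euc d => expFn l t := by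
  unfold expFn; fun_prop

lemma continuous_expLp (S : Set (Euc d)) (hS : volume S ≠ ⊤) : Continuous (expLp S hS) := by
  have := isFiniteMeasure_restrict.2 hS
  refine continuous_iff_seqContinuous.2 fun {u γ} hu => ?_
  have hbounded : ∀ n, {t | (2 : NNReal) ≤ ‖expFn (u n) t‖₊} = ∅ := fun n => by
    ext t
    simp [← NNReal.coe_le_coe, expFn_norm]
  have hui : UnifIntegrable (fun n => expFn (u n)) 2 (volume.restrict S) :=
    unifIntegrable_of one_le_two ENNReal.ofNat_ne_top
      (fun n => (expFn_continuous _).aestronglyMeasurable) fun ε _ =>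
        ⟨2, fun n => by simp [hbounded n]⟩
  exact (Lp.tendsto_Lp_iff_tendsto_eLpNorm'' _ (fun n => expFn_memLp S hS (u n)) _
    (expFn_memLp S hS γ)).2 <|
    tendsto_Lp_finite_of_tendsto_ae one_le_two ENNReal.ofNat_ne_top
      (fun n => (expFn_continuous _).aestronglyMeasurable) (expFn_memLp S hS γ) hui
      (ae_of_all _ fun t => ((continuous_expFn_left t).tendsto γ).comp hu)

lemma inner_expLp_add_add (S : Set (Euc d)) (hS : volume S ≠ ⊤) (a b x : Euc d) :
    ⟪expLp S hS (a + x), expLp S hS (b + x)⟫_ℂ = ⟪expLp S hS a, expLp S hS b⟫_ℂ := by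
  simp only [L2.inner_def]
  refine integral_congr_ae ?_
  filter_upwards [(expFn_memLp S hS (a + x)).coeFn_toLp, (expFn_memLp S hS (b + x)).coeFn_toLp,
    (expFn_memLp S hS a).coeFn_toLp, (expFn_memLp S hS b).coeFn_toLp] with t h₁ h₂ h₃ h₄
  simp only [expLp, h₁, h₂, h₃, h₄, RCLike.inner_apply, expFn_add, map_mul]
  have hx : conj (expFn x t) * expFn x t = 1 := by
    rw [Complex.conj_mul', expFn_norm]; norm_num
  linear_combination (conj (expFn a t) * expFn b t) * hx

section RieszBounds

variable {ι E : Type*}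

def RieszBoundsOn [SeminormedAddCommGroup E] [Module ℂ E] (A B : ℝ) (v : ι → E) (t : Finset ι)
    (c : ι → ℂ) : Prop :=
  A * ∑ i ∈ t, ‖c i‖ ^ 2 ≤ ‖∑ i ∈ t, c i • v i‖ ^ 2 ∧
    ‖∑ i ∈ t, c i • v i‖ ^ 2 ≤ B * ∑ i ∈ t, ‖c i‖ ^ 2

lemma RieszBoundsOn.of_tendsto [SeminormedAddCommGroup E] [Module ℂ E] [ContinuousSMul ℂ E]
    {α : Type*} {l : Filter α} [l.NeBot] {A B : ℝ} {t : Finset ι} {c : ι → ℂ}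
    {v : α → ι → E} {w : ι → E} (hv : ∀ i ∈ t, Tendsto (fun n => v n i) l (𝓝 (w i)))
    (h : ∀ᶠ n in l, RieszBoundsOn A B (v n) t c) : RieszBoundsOn A B w t c := by
  have hlim : Tendsto (fun n => ‖∑ i ∈ t, c i • v n i‖ ^ 2) l (𝓝 (‖∑ i ∈ t, c i • w i‖ ^ 2)) :=
    ((tendsto_finsetSum t fun i hi => (hv i hi).const_smul (c i)).norm).pow 2
  exact ⟨ge_of_tendsto hlim (h.mono fun _ hn => hn.1), le_of_tendsto hlim (h.mono fun _ hn => hn.2)⟩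

lemma norm_sum_smul_eq_of_inner_eq [NormedAddCommGroup E] [InnerProductSpace ℂ E] {v w : ι → E}
    (h : ∀ i j, ⟪v i, v j⟫_ℂ = ⟪w i, w j⟫_ℂ) (t : Finset ι) (c : ι → ℂ) :
    ‖∑ i ∈ t, c i • v i‖ = ‖∑ i ∈ t, c i • w i‖ := by
  simp only [norm_eq_sqrt_re_inner (𝕜 := ℂ), sum_inner, inner_sum, inner_smul_left,
    inner_smul_right, h]

end RieszBounds

lemma eventually_injOn_of_tendsto {ι α X : Type*} [TopologicalSpace X] [T2Space X]
    {l : Filter α} {u : ι → α → X} {γ : ι → X} {t : Finset ι}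
    (hu : ∀ i ∈ t, Tendsto (u i) l (𝓝 (γ i))) (hγ : Set.InjOn γ t) :
    ∀ᶠ n in l, Set.InjOn (fun i => u i n) t := by
  have hpairs : ∀ i ∈ t, ∀ j ∈ t, ∀ᶠ n in l, u i n = u j n → i = j := fun i hi j hj => by
    by_cases hij : i = j
    · exact Eventually.of_forall fun _ _ => hij
    · have hne : γ i ≠ γ j := fun h => hij (hγ hi hj h)
      exact ((hu i hi).prodMk_nhds (hu j hj)).eventually
        ((isOpen_ne_fun continuous_fst continuous_snd).mem_nhds hne) |>.mono
          fun _ hn h => absurd h hn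
  filter_upwards [(eventually_all_finset _).2 fun i hi => (eventually_all_finset _).2 (hpairs i hi)]
    with n hn i hi j hj using hn i hi j hj

section IsRieszSeq

variable {S : Set (Euc d)} {hS : volume S ≠ ⊤} {Λ : Set (Euc d)} {A B : ℝ}

lemma IsRieszSeq.rieszBoundsOn {ι : Type*} (hR : IsRieszSeq S hS Λ A B) {t : Finset ι}
    {g : ι → Euc d} (hg : ∀ i ∈ t, g i ∈ Λ) (hinj : Set.InjOn g t) (c : ι → ℂ) :
    RieszBoundsOn A B (fun i => expLp S hS (g i)) t c := by
  let e : t → Λ := fun i => ⟨g i, hg i i.2⟩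
  have he : Function.Injective e := fun i j hij =>
    Subtype.ext (hinj i.2 j.2 (congrArg Subtype.val hij))
  let c₀ : Λ →₀ ℂ := (Finsupp.equivFunOnFinite.symm fun i : t => c i).mapDomain e
  have hsum : ∀ {M : Type} [AddCommMonoid M] (F : Euc d → ℂ → M), (∀ l, F l 0 = 0) →
      ∑ l ∈ c₀.support, F l (c₀ l) = ∑ i ∈ t, F (g i) (c i) := fun F hF => by
    rw [← Finsupp.sum, Finsupp.sum_mapDomain_index_inj he,
      Finsupp.sum_fintype _ _ fun _ => hF _, ← Finset.sum_coe_sort t]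
    rfl
  have h := hR c₀
  rwa [hsum (fun _ z => ‖z‖ ^ 2) (by simp), hsum (fun l z => z • expLp S hS l) (by simp)] at h

lemma IsRieszSeq.rieszBoundsOn_setTrans {ι : Type*} (hR : IsRieszSeq S hS Λ A B) (x : Euc d)
    {t : Finset ι} {g : ι → Euc d} (hg : ∀ i ∈ t, g i ∈ setTrans Λ x) (hinj : Set.InjOn g t)
    (c : ι → ℂ) : RieszBoundsOn A B (fun i => expLp S hS (g i)) t c := by
  have hgx : ∀ i ∈ t, g i + x ∈ Λ := fun i hi => by
    obtain ⟨l, hl, hlx⟩ := hg i hi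
    simpa [← hlx] using hl
  have h := hR.rieszBoundsOn hgx (fun i hi j hj hij => hinj hi hj (add_right_cancel hij)) c
  rwa [RieszBoundsOn, norm_sum_smul_eq_of_inner_eq (fun i j => inner_expLp_add_add S hS _ _ x)]
    at h

end IsRieszSeq

theorem stmt10_general {d : ℕ} (S : Set (Euc d)) (hS : volume S ≠ ⊤) (Λ : Set (Euc d))
    (A B : ℝ)
    (hR : IsRieszSeq S hS Λ A B)
    (Γ : Set (Euc d)) (hΓ : InHull Λ Γ) :
    IsRieszSeq S hS Γ A B := by
  obtain ⟨x, hΓ_approx, -⟩ := hΓ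
  intro c
  choose u hu_mem hu_lim using fun γ : Γ => hΓ_approx γ γ.2
  show RieszBoundsOn A B (fun γ : Γ => expLp S hS γ) c.support c
  refine RieszBoundsOn.of_tendsto (l := atTop) (v := fun n γ => expLp S hS (u γ n))
    (fun γ _ => ((continuous_expLp S hS).tendsto γ).comp (hu_lim γ)) ?_
  filter_upwards [eventually_injOn_of_tendsto (fun γ _ => hu_lim γ) Subtype.val_injective.injOn]
    with n hn
  exact hR.rieszBoundsOn_setTrans (x n) (fun γ _ => hu_mem γ n) hn c

theorem stmt10 {d : ℕ} (S : Set (Euc d)) (hS : volume S ≠ ⊤) (Λ : Set (Euc d))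
    (hsep : IsSeparated Λ) (A B : ℝ) (hA : 0 < A) (hAB : A ≤ B)
    (hR : IsRieszSeq S hS Λ A B)
    (Γ : Set (Euc d)) (hΓ : InHull Λ Γ) :
    IsRieszSeq S hS Γ A B :=
  stmt10_general S hS Λ A B hR Γ hΓ

end
end

section
/- Let Q ⊆ ℝ^d be Lebesgue measurable. Then liminf_{r→∞} inf_{x∈ℝ^d} |Q ∩ B_r(x)| / |B_r(0)| = 0 if and only if for every r > 0 and δ > 0 there exists x ∈ ℝ^d such that |Q ∩ B_r(x)| < δ. -/
open MeasureTheory Filter Metric Complex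
open scoped ENNReal InnerProductSpace ComplexConjugate

noncomputable section

variable {d : ℕ}

/-!
If every ball of radius `r` meets `Q` in measure at least `c > 0`, average `y ↦ |Q ∩ B_r(y)|`
over `y ∈ B_{R-r}(x)`: by Fubini this is at most `|Q ∩ B_R(x)| |B_r|`, so
`|Q ∩ B_R(x)| / |B_R| ≥ c |B_{R-r}| / (|B_r| |B_R|) ≥ c / (2^d |B_r|)` once `R ≥ 2r`,
and the liminf is positive. Conversely, if every `r` admits balls meeting `Q` in arbitrarily small
measure, the infimum over centres vanishes for every radius.
-/

section
variable {E : Type*} [NormedAddCommGroup E] [MeasurableSpace E] [BorelSpace E]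

section LeftInvariant
variable [SecondCountableTopology E] (μ : Measure E) [μ.IsAddLeftInvariant] [SFinite μ]

theorem lintegral_measure_inter_ball {A : Set E} (hA : MeasurableSet A) (r : ℝ) :
    ∫⁻ y, μ (A ∩ ball y r) ∂μ = μ A * μ (ball 0 r) := by
  have hS : MeasurableSet {p : E × E | p.2 ∈ A ∧ dist p.2 p.1 < r} :=
    (measurable_snd hA).inter
      (isOpen_lt (continuous_snd.dist continuous_fst) continuous_const).measurableSet
  have hball (t : E) : μ (ball t r) = μ (ball 0 r) := by
    rw [← measure_preimage_add μ t, preimage_add_ball, sub_self]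
  calc ∫⁻ y, μ (A ∩ ball y r) ∂μ
        = μ.prod μ {p : E × E | p.2 ∈ A ∧ dist p.2 p.1 < r} := (Measure.prod_apply hS).symm
    _ = ∫⁻ t, A.indicator (fun _ => μ (ball 0 r)) t ∂μ := by
        rw [Measure.prod_apply_symm hS]
        refine lintegral_congr fun t => ?_
        by_cases ht : t ∈ A
        · rw [Set.indicator_of_mem ht, ← hball t]
          congr 1
          ext y
          simp [ht, dist_comm]
        · simp [ht]
    _ = μ A * μ (ball 0 r) := by rw [lintegral_indicator_const hA, mul_comm]

theorem mul_measure_ball_sub_le {Q : Set E} (hQ : MeasurableSet Q) {c : ℝ≥0∞} {r : ℝ}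
    (h : ∀ y, c ≤ μ (Q ∩ ball y r)) (x : E) (R : ℝ) :
    c * μ (ball x (R - r)) ≤ μ (Q ∩ ball x R) * μ (ball 0 r) :=
  calc c * μ (ball x (R - r))
        = ∫⁻ _ in ball x (R - r), c ∂μ := (setLIntegral_const _ _).symm
    _ ≤ ∫⁻ y in ball x (R - r), μ (Q ∩ ball x R ∩ ball y r) ∂μ := by
        refine setLIntegral_mono' measurableSet_ball fun y hy => (h y).trans (measure_mono ?_)
        have : ball y r ⊆ ball x R := ball_subset_ball' (by rw [mem_ball] at hy; linarith)
        exact fun t ht => ⟨⟨ht.1, this ht.2⟩, ht.2⟩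
    _ ≤ ∫⁻ y, μ (Q ∩ ball x R ∩ ball y r) ∂μ := setLIntegral_le_lintegral _ _
    _ = μ (Q ∩ ball x R) * μ (ball 0 r) :=
        lintegral_measure_inter_ball μ (hQ.inter measurableSet_ball) r

end LeftInvariant

variable [NormedSpace ℝ E] [FiniteDimensional ℝ E] (μ : Measure E) [μ.IsAddHaarMeasure]

theorem addHaar_ball_le_two_pow_mul (x : E) {R s : ℝ} (h : R ≤ 2 * s) :
    μ (ball x R) ≤ 2 ^ Module.finrank ℝ E * μ (ball x s) :=
  calc μ (ball x R) ≤ μ (ball x (2 * s)) := measure_mono (ball_subset_ball h)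
    _ = 2 ^ Module.finrank ℝ E * μ (ball x s) := by
        rw [Measure.addHaar_ball_mul_of_pos μ x two_pos, Measure.addHaar_ball_center μ x,
          ENNReal.ofReal_pow zero_le_two, ENNReal.ofReal_ofNat]

theorem div_le_measure_inter_ball_div {Q : Set E} (hQ : MeasurableSet Q) {c : ℝ≥0∞}
    {r R : ℝ} (hr : 0 < r) (hR : 2 * r ≤ R) (h : ∀ y, c ≤ μ (Q ∩ ball y r)) (x : E) :
    c / (2 ^ Module.finrank ℝ E * μ (ball 0 r)) ≤ μ (Q ∩ ball x R) / μ (ball 0 R) := by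
  have hK : 2 ^ Module.finrank ℝ E * μ (ball (0 : E) r) ≠ 0 :=
    mul_ne_zero (by simp) (measure_ball_pos μ 0 hr).ne'
  have hK' : 2 ^ Module.finrank ℝ E * μ (ball (0 : E) r) ≠ ∞ :=
    ENNReal.mul_ne_top (by simp) measure_ball_lt_top.ne
  rw [ENNReal.le_div_iff_mul_le (.inl (measure_ball_pos μ 0 (by linarith)).ne')
    (.inl measure_ball_lt_top.ne), ← ENNReal.mul_div_right_comm, ENNReal.div_le_iff hK hK']
  calc c * μ (ball 0 R) ≤ c * (2 ^ Module.finrank ℝ E * μ (ball x (R - r))) := by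
        rw [← Measure.addHaar_ball_center μ x]
        exact mul_le_mul_right (addHaar_ball_le_two_pow_mul μ x (by linarith)) c
    _ = 2 ^ Module.finrank ℝ E * (c * μ (ball x (R - r))) := by ring
    _ ≤ 2 ^ Module.finrank ℝ E * (μ (Q ∩ ball x R) * μ (ball 0 r)) :=
        mul_le_mul_right (mul_measure_ball_sub_le μ hQ h x R) _
    _ = μ (Q ∩ ball x R) * (2 ^ Module.finrank ℝ E * μ (ball 0 r)) := by ring

theorem liminf_iInf_measure_inter_ball_div_eq_zero_iff {Q : Set E} (hQ : MeasurableSet Q) :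
    liminf (fun R : ℝ => ⨅ x, μ (Q ∩ ball x R) / μ (ball 0 R)) atTop = 0 ↔
      ∀ r > 0, ⨅ x, μ (Q ∩ ball x r) = 0 := by
  constructor
  · contrapose!
    rintro ⟨r, hr, hc⟩
    have hbound : ∀ᶠ R in atTop,
        (⨅ y, μ (Q ∩ ball y r)) / (2 ^ Module.finrank ℝ E * μ (ball 0 r))
          ≤ ⨅ x, μ (Q ∩ ball x R) / μ (ball 0 R) :=
      (eventually_ge_atTop (2 * r)).mono fun R hR => le_iInf fun x =>
        div_le_measure_inter_ball_div μ hQ hr hR (fun y => iInf_le _ y) x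
    exact ((ENNReal.div_pos hc (ENNReal.mul_ne_top (by simp) measure_ball_lt_top.ne)).trans_le
      (le_liminf_of_le (by isBoundedDefault) hbound)).ne'
  · intro h
    have hzero : ∀ᶠ R in atTop, ⨅ x, μ (Q ∩ ball x R) / μ (ball 0 R) = 0 :=
      (eventually_gt_atTop 0).mono fun R hR => by
        rw [← ENNReal.iInf_div_of_ne (measure_ball_pos μ 0 hR).ne' measure_ball_lt_top.ne,
          h R hR, ENNReal.zero_div]
    rw [liminf_congr hzero, liminf_const]

end

theorem ENNReal.iInf_eq_zero_iff_forall_exists_lt_ofReal {ι : Sort*} (f : ι → ℝ≥0∞) :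
    ⨅ i, f i = 0 ↔ ∀ δ > (0 : ℝ), ∃ i, f i < ENNReal.ofReal δ := by
  refine iInf_eq_bot.trans ⟨fun h δ hδ => h _ (ENNReal.ofReal_pos.mpr hδ), fun h b hb => ?_⟩
  obtain ⟨δ, -, hδ, hδb⟩ := ENNReal.lt_iff_exists_real_btwn.mp hb
  obtain ⟨i, hi⟩ := h δ (ENNReal.ofReal_pos.mp hδ)
  exact ⟨i, hi.trans hδb⟩

theorem stmt11 {d : ℕ} (Q : Set (Euc d)) (hQ : MeasurableSet Q) :
    Filter.liminf (fun r : ℝ =>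
        ⨅ x : Euc d, volume (Q ∩ ball x r) / volume (ball (0 : Euc d) r)) atTop = 0 ↔
      ∀ r > (0 : ℝ), ∀ δ > (0 : ℝ), ∃ x : Euc d,
        volume (Q ∩ ball x r) < ENNReal.ofReal δ := by
  rw [liminf_iInf_measure_inter_ball_div_eq_zero_iff volume hQ]
  exact forall₂_congr fun r _ => ENNReal.iInf_eq_zero_iff_forall_exists_lt_ofReal _

end
end

section
/- Let Q ⊆ ℝ^d be measurable and suppose there exist r₀, δ₀ > 0 such that |Q ∩ B_{r₀}(x)| ≥ δ₀ for all x ∈ ℝ^d. Then for all r > 0 and all y ∈ ℝ^d, |Q ∩ B_{r+r₀}(y)| / |B_r(0)| ≥ δ₀ / |B_{r₀}(0)|. -/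
open MeasureTheory Filter Metric Complex
open scoped ENNReal InnerProductSpace ComplexConjugate

noncomputable section

variable {d : ℕ}

/-!
Averaging `δ₀ ≤ |Q ∩ B_{r₀}(x)|` over `x ∈ B_r(y)` gives `δ₀ |B_r| ≤ ∫_{B_r(y)} |Q ∩ B_{r₀}(x)| dx`.
For such `x` the set `Q ∩ B_{r₀}(x)` lies in `S = Q ∩ B_{r+r₀}(y)`, so by Tonelli the integral equals
`∫_S |B_r(y) ∩ B_{r₀}(z)| dz ≤ |S| |B_{r₀}|`.
-/

section MetricSpace

variable {X : Type*} [PseudoMetricSpace X] [MeasurableSpace X] [OpensMeasurableSpace X]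
  [SecondCountableTopology X]

theorem lintegral_measure_ball_comm (μ ν : Measure X) [SFinite μ] [SFinite ν] (r : ℝ) :
    ∫⁻ x, ν (ball x r) ∂μ = ∫⁻ z, μ (ball z r) ∂ν := by
  have hs : MeasurableSet {p : X × X | dist p.2 p.1 < r} :=
    measurableSet_lt (measurable_snd.dist measurable_fst) measurable_const
  calc ∫⁻ x, ν (ball x r) ∂μ = μ.prod ν {p | dist p.2 p.1 < r} := (Measure.prod_apply hs).symm
    _ = ∫⁻ z, μ (ball z r) ∂ν := by
      rw [Measure.prod_apply_symm hs]
      simp_rw [Set.preimage_ofPred_eq, ← mem_ball']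
      rfl

theorem setLIntegral_measure_inter_ball_le (μ : Measure X) [SFinite μ] (Q : Set X) (y : X)
    (r r₀ : ℝ) :
    ∫⁻ x in ball y r, μ (Q ∩ ball x r₀) ∂μ ≤ ∫⁻ z in Q ∩ ball y (r + r₀), μ (ball z r₀) ∂μ := by
  set S := Q ∩ ball y (r + r₀)
  have hS : ∀ x ∈ ball y r, μ (Q ∩ ball x r₀) = μ.restrict S (ball x r₀) := by
    intro x hx
    have hsub : ball x r₀ ⊆ ball y (r + r₀) :=
      ball_subset_ball' (by linarith [mem_ball.1 hx])
    rw [Measure.restrict_apply measurableSet_ball, ← Set.inter_assoc, Set.inter_comm (ball x r₀) Q,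
      Set.inter_assoc, Set.inter_eq_left.2 hsub]
  calc ∫⁻ x in ball y r, μ (Q ∩ ball x r₀) ∂μ
      = ∫⁻ x in ball y r, μ.restrict S (ball x r₀) ∂μ :=
        setLIntegral_congr_fun measurableSet_ball hS
    _ = ∫⁻ z in S, μ.restrict (ball y r) (ball z r₀) ∂μ := lintegral_measure_ball_comm _ _ _
    _ ≤ ∫⁻ z in S, μ (ball z r₀) ∂μ := lintegral_mono fun z => Measure.restrict_apply_le _ _

end MetricSpace

theorem measure_inter_ball_mul_le {E : Type*} [NormedAddCommGroup E] [MeasurableSpace E]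
    [BorelSpace E] [ProperSpace E] (μ : Measure E) [μ.IsAddHaarMeasure] {Q : Set E} {r₀ : ℝ}
    {δ : ℝ≥0∞} (h : ∀ x, δ ≤ μ (Q ∩ ball x r₀)) (y : E) (r : ℝ) :
    δ * μ (ball 0 r) ≤ μ (Q ∩ ball y (r + r₀)) * μ (ball 0 r₀) :=
  calc δ * μ (ball 0 r) = ∫⁻ _ in ball y r, δ ∂μ := by
        rw [setLIntegral_const, Measure.addHaar_ball_center μ y, mul_comm]
    _ ≤ ∫⁻ x in ball y r, μ (Q ∩ ball x r₀) ∂μ := lintegral_mono h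
    _ ≤ ∫⁻ z in Q ∩ ball y (r + r₀), μ (ball z r₀) ∂μ :=
        setLIntegral_measure_inter_ball_le μ Q y r r₀
    _ = μ (Q ∩ ball y (r + r₀)) * μ (ball 0 r₀) := by
        simp_rw [Measure.addHaar_ball_center μ]
        rw [setLIntegral_const, mul_comm]

theorem stmt12_general {d : ℕ} (Q : Set (Euc d))
    (r₀ δ₀ : ℝ) (hr₀ : 0 < r₀)
    (h : ∀ x : Euc d, ENNReal.ofReal δ₀ ≤ volume (Q ∩ ball x r₀)) :
    ∀ r > (0 : ℝ), ∀ y : Euc d,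
      ENNReal.ofReal δ₀ / volume (ball (0 : Euc d) r₀) ≤
        volume (Q ∩ ball y (r + r₀)) / volume (ball (0 : Euc d) r) := by
  intro r hr y
  rw [ENNReal.div_le_iff_le_mul (.inl (measure_ball_pos volume 0 hr₀).ne')
      (.inl measure_ball_lt_top.ne), ← ENNReal.mul_div_right_comm,
    ENNReal.le_div_iff_mul_le (.inl (measure_ball_pos volume 0 hr).ne')
      (.inl measure_ball_lt_top.ne)]
  exact measure_inter_ball_mul_le volume h y r

theorem stmt12 {d : ℕ} (Q : Set (Euc d)) (hQ : MeasurableSet Q)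
    (r₀ δ₀ : ℝ) (hr₀ : 0 < r₀) (hδ₀ : 0 < δ₀)
    (h : ∀ x : Euc d, ENNReal.ofReal δ₀ ≤ volume (Q ∩ ball x r₀)) :
    ∀ r > (0 : ℝ), ∀ y : Euc d,
      ENNReal.ofReal δ₀ / volume (ball (0 : Euc d) r₀) ≤
        volume (Q ∩ ball y (r + r₀)) / volume (ball (0 : Euc d) r) :=
  stmt12_general Q r₀ δ₀ hr₀ h

end
end

section
/- Let H be a Hilbert space, let {f_i}_{i∈I} be a frame for H with frame operator S, and suppose ⟨f_i, S^{-1} f_i⟩ = 1 for all i ∈ I. Then {S^{-1/2} f_i}_{i∈I} is an orthonormal basis of H, and consequently {f_i}_{i∈I} is a Riesz basis for H. -/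
open MeasureTheory Filter Metric Complex
open scoped ENNReal InnerProductSpace ComplexConjugate

noncomputable section

variable {d : ℕ}

/-!
The canonical Parseval frame `{S^{-1/2} f_i}` satisfies
`∑ |⟨S^{-1/2} f_i, g⟩|² = ⟨S S^{-1/2} g, S^{-1/2} g⟩ = ‖g‖²`, and the hypothesis
`⟨f_i, S^{-1} f_i⟩ = 1` says its vectors are unit vectors. In a Parseval frame the identity for `g = e_j`
reads `1 = ∑_k |⟨e_k, e_j⟩|² = 1 + ∑_{k ≠ j} |⟨e_k, e_j⟩|²`, which forces orthogonality, while any `g`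
orthogonal to all `e_k` has `‖g‖² = 0`. Finally `f_i = S^{1/2} (S^{-1/2} f_i)` exhibits `{f_i}` as the
image of an orthonormal basis under the invertible operator `S^{1/2} = S S^{-1/2}`.
-/

theorem mul_mul_eq_one_of_mul_self_eq_inverse {M : Type*} [Monoid M] {s t r : M}
    (hst : s * t = 1) (hts : t * s = 1) (hr : r * r = t) : r * s * r = 1 := by
  have hrs : r * s = s * r :=
    calc r * s = s * t * r * s := by rw [hst, one_mul]
      _ = s * r * (t * s) := by rw [← hr]; simp only [mul_assoc]
      _ = s * r := by rw [hts, mul_one]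
  rw [hrs, mul_assoc, hr, hst]

section ParsevalFrame

variable {𝕜 E ι : Type*} [RCLike 𝕜] [NormedAddCommGroup E] [InnerProductSpace 𝕜 E] {e : ι → E}

theorem orthonormal_of_hasSum_norm_inner_sq
    (hP : ∀ x, HasSum (fun i => ‖⟪e i, x⟫_𝕜‖ ^ 2) (‖x‖ ^ 2)) (he : ∀ i, ‖e i‖ = 1) :
    Orthonormal 𝕜 e := by
  classical
  refine ⟨he, fun i j hij => ?_⟩
  have hpair := sum_le_hasSum {i, j} (fun _ _ => sq_nonneg _) (hP (e j))
  rw [Finset.sum_pair hij, inner_self_eq_norm_sq_to_K, he j] at hpair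
  simpa using hpair

theorem topologicalClosure_span_eq_top_of_hasSum_norm_inner_sq [CompleteSpace E]
    (hP : ∀ x, HasSum (fun i => ‖⟪e i, x⟫_𝕜‖ ^ 2) (‖x‖ ^ 2)) :
    (Submodule.span 𝕜 (Set.range e)).topologicalClosure = ⊤ := by
  rw [Submodule.topologicalClosure_eq_top_iff, Submodule.eq_bot_iff]
  intro x hx
  have horth : ∀ i, ⟪e i, x⟫_𝕜 = 0 := fun i =>
    Submodule.inner_right_of_mem_orthogonal (Submodule.subset_span (Set.mem_range_self i)) hx
  have hzero : ‖x‖ ^ 2 = 0 := (hP x).unique (by simp [horth])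
  exact norm_eq_zero.1 ((pow_eq_zero_iff two_ne_zero).1 hzero)

end ParsevalFrame

section FrameOperator

variable {𝕜 E ι : Type*} [RCLike 𝕜] [NormedAddCommGroup E] [InnerProductSpace 𝕜 E]

theorem hasSum_norm_inner_sq_re_inner_tsum (F : ι → E) (x : E)
    (hs : Summable fun i => ⟪F i, x⟫_𝕜 • F i) :
    HasSum (fun i => ‖⟪F i, x⟫_𝕜‖ ^ 2) (RCLike.re ⟪x, ∑' i, ⟪F i, x⟫_𝕜 • F i⟫_𝕜) := by
  have h := RCLike.hasSum_re 𝕜 (hs.hasSum.mapL (innerSL 𝕜 x))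
  convert h using 2 with i
  · rw [innerSL_apply_apply, inner_smul_right, ← inner_conj_symm x, RCLike.mul_conj]
    norm_cast
  · rfl

variable {F : ι → E} {Sop T : E →L[𝕜] E}

-- A non-summable series has `tsum` zero, which the left inverse `T` of `Sop` rules out unless `x = 0`.
theorem summable_of_leftInverse_frameOp (hSop : ∀ f, Sop f = ∑' i, ⟪F i, f⟫_𝕜 • F i)
    (hTS : ∀ f, T (Sop f) = f) (x : E) : Summable fun i => ⟪F i, x⟫_𝕜 • F i := by
  by_contra hns
  have hx : x = 0 := by rw [← hTS x, hSop, tsum_eq_zero_of_not_summable hns, map_zero]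
  subst hx
  exact hns (by simp)

theorem hasSum_norm_inner_apply_sq_of_mul_frameOp_mul_eq_one
    (hSop : ∀ f, Sop f = ∑' i, ⟪F i, f⟫_𝕜 • F i) (hTS : ∀ f, T (Sop f) = f) {R : E →L[𝕜] E}
    (hRsa : ∀ f g, ⟪R f, g⟫_𝕜 = ⟪f, R g⟫_𝕜) (hRSR : ∀ f, R (Sop (R f)) = f) (g : E) :
    HasSum (fun i => ‖⟪R (F i), g⟫_𝕜‖ ^ 2) (‖g‖ ^ 2) := by
  have h := hasSum_norm_inner_sq_re_inner_tsum F (R g) (summable_of_leftInverse_frameOp hSop hTS _)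
  rw [← hSop, hRsa, hRSR, inner_self_eq_norm_sq] at h
  simp only [hRsa]
  exact h

end FrameOperator

theorem stmt14_general {H : Type*} [NormedAddCommGroup H] [InnerProductSpace ℂ H]
    [CompleteSpace H] {ι : Type*} (F : ι → H)
    (Sop T R : H →L[ℂ] H)
    (hSop : ∀ f : H, Sop f = ∑' i, ⟪F i, f⟫_ℂ • F i)
    (hT : ∀ f : H, Sop (T f) = f ∧ T (Sop f) = f)
    (hRsa : ∀ f g : H, ⟪R f, g⟫_ℂ = ⟪f, R g⟫_ℂ)
    (hRsq : ∀ f : H, R (R f) = T f)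
    (hdiag : ∀ i : ι, ⟪F i, T (F i)⟫_ℂ = 1) :
    (Orthonormal ℂ (fun i => R (F i)) ∧
      (Submodule.span ℂ (Set.range fun i => R (F i))).topologicalClosure = ⊤) ∧
    ∃ V W : H →L[ℂ] H, (∀ x, W (V x) = x) ∧ (∀ x, V (W x) = x) ∧
      ∀ i, F i = V (R (F i)) := by
  have hST : Sop * T = 1 := ContinuousLinearMap.ext fun f => (hT f).1
  have hTS : T * Sop = 1 := ContinuousLinearMap.ext fun f => (hT f).2
  have hRR : R * R = T := ContinuousLinearMap.ext hRsq
  have hRSR : R * Sop * R = 1 := mul_mul_eq_one_of_mul_self_eq_inverse hST hTS hRR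
  have hP := hasSum_norm_inner_apply_sq_of_mul_frameOp_mul_eq_one (F := F) hSop
    (fun f => (hT f).2) hRsa (DFunLike.congr_fun hRSR)
  have hunit : ∀ i, ‖R (F i)‖ = 1 := fun i => by
    have h := inner_self_eq_norm_sq (𝕜 := ℂ) (R (F i))
    rw [hRsa, hRsq, hdiag, RCLike.one_re] at h
    exact (pow_eq_one_iff_of_nonneg (norm_nonneg _) two_ne_zero).1 h.symm
  refine ⟨⟨orthonormal_of_hasSum_norm_inner_sq hP hunit,
    topologicalClosure_span_eq_top_of_hasSum_norm_inner_sq hP⟩, Sop * R, R, fun x => ?_,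
    fun x => ?_, fun i => ?_⟩
  · exact DFunLike.congr_fun hRSR x
  · rw [← mul_apply_eq_comp, mul_assoc, hRR, hST, one_apply_eq_self]
  · rw [mul_apply_eq_comp, hRsq, (hT _).1]

theorem stmt14 {H : Type*} [NormedAddCommGroup H] [InnerProductSpace ℂ H]
    [CompleteSpace H] {ι : Type*} (F : ι → H)
    (A B : ℝ) (hA : 0 < A) (hAB : A ≤ B)
    (hframe : ∀ f : H, A * ‖f‖ ^ 2 ≤ ∑' i, ‖⟪F i, f⟫_ℂ‖ ^ 2 ∧
      ∑' i, ‖⟪F i, f⟫_ℂ‖ ^ 2 ≤ B * ‖f‖ ^ 2)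
    (Sop T R : H →L[ℂ] H)
    (hSop : ∀ f : H, Sop f = ∑' i, ⟪F i, f⟫_ℂ • F i)
    (hT : ∀ f : H, Sop (T f) = f ∧ T (Sop f) = f)
    (hRsa : ∀ f g : H, ⟪R f, g⟫_ℂ = ⟪f, R g⟫_ℂ)
    (hRsq : ∀ f : H, R (R f) = T f)
    (hRpos : ∀ f : H, 0 ≤ (⟪R f, f⟫_ℂ).re)
    (hdiag : ∀ i : ι, ⟪F i, T (F i)⟫_ℂ = 1) :
    (Orthonormal ℂ (fun i => R (F i)) ∧
      (Submodule.span ℂ (Set.range fun i => R (F i))).topologicalClosure = ⊤) ∧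
    ∃ V W : H →L[ℂ] H, (∀ x, W (V x) = x) ∧ (∀ x, V (W x) = x) ∧
      ∀ i, F i = V (R (F i)) :=
  stmt14_general F Sop T R hSop hT hRsa hRsq hdiag
end
end
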